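/- arXiv:1309.7761 — 3 statements merged into one kernel-verified Lean document; each statement's English description precedes it below -/
import Mathlib

section
/- Let α ∈ (0,1], let L be slowly varying at infinity, ψ(λ) = λ^{1+α} L(1/λ), φ(z) = ∫_z^∞ dξ/ψ(ξ), φ⁻¹ its inverse, and F̄(t) = 1 - exp(-φ⁻¹(t)). Then F̄ is regularly varying at infinity with index -1/α; consequently, for every δ > 0, t^{1/α+δ} F̄(t) → ∞ and t^{1/α-δ} F̄(t) → 0 as t → ∞. -/
/-!
Since `1/ψ` is regularly varying at `0⁺` with index `-(1+α)` and `φ(z) → ∞` as `z ↓ 0`, the tail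
integral `φ` is regularly varying at `0⁺` with index `-α`: tail integrals of asymptotically
equivalent nonnegative functions are asymptotically equivalent once they diverge. Inverting the
decreasing bijection `φ` turns index `-α` at `0⁺` into index `-1/α` at `∞` for `φ⁻¹`, and
`F̄ ∼ φ⁻¹` because `φ⁻¹(t) → 0`. Finally, `F̄(2t)/F̄(t) → 2^(-1/α)` makes `t^q F̄(t)` eventually
increase (for `q > 1/α`) or decrease (for `q < 1/α`) under doubling, and the monotonicity of `F̄`
controls it between dyadic points; so `t^q F̄(t)` is bounded below, resp. above, and the leftover
power of `t` gives both limits.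
-/

open Filter MeasureTheory Set Real Asymptotics Topology

def IsRegularlyVarying (l : Filter ℝ) (f : ℝ → ℝ) (p : ℝ) : Prop :=
  ∀ c > 0, Tendsto (fun x => f (c * x) / f x) l (𝓝 (c ^ p))

theorem tendsto_const_mul_nhdsGT_zero {c : ℝ} (hc : 0 < c) :
    Tendsto (c * ·) (𝓝[>] 0) (𝓝[>] 0) :=
  tendsto_iff_comap.2 (comap_mulLeft_nhdsGT_zero hc).ge

theorem isRegularlyVarying_rpow {l : Filter ℝ} (hl : ∀ᶠ x in l, 0 < x) (p : ℝ) :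
    IsRegularlyVarying l (fun x => x ^ p) p := fun c hc =>
  tendsto_const_nhds.congr' <| hl.mono fun x hx => by
    dsimp only
    rw [mul_rpow hc.le hx.le, mul_div_cancel_right₀ _ (rpow_pos_of_pos hx p).ne']

namespace IsRegularlyVarying

variable {l : Filter ℝ} {f g : ℝ → ℝ} {p q : ℝ}

theorem of_isEquivalent (hg : IsRegularlyVarying l g p) (hl : ∀ c > 0, Tendsto (c * ·) l l)
    (hfg : f ~[l] g) : IsRegularlyVarying l f p := fun c hc =>
  ((hfg.comp_tendsto (hl c hc)).div hfg).symm.tendsto_nhds (hg c hc)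

theorem mul (hf : IsRegularlyVarying l f p) (hg : IsRegularlyVarying l g q) :
    IsRegularlyVarying l (f * g) (p + q) := fun c hc => by
  rw [rpow_add hc]
  exact ((hf c hc).mul (hg c hc)).congr fun x => (mul_div_mul_comm _ _ _ _).symm

theorem inv (hf : IsRegularlyVarying l f p) : IsRegularlyVarying l f⁻¹ (-p) := fun c hc => by
  rw [rpow_neg hc.le]
  exact ((hf c hc).inv₀ (rpow_pos_of_pos hc p).ne').congr fun x => by
    simp only [Pi.inv_apply, inv_div_inv, inv_div]

theorem comp_inv (hf : IsRegularlyVarying atTop f p) :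
    IsRegularlyVarying (𝓝[>] 0) (fun x => f x⁻¹) (-p) := fun c hc => by
  have := (hf c⁻¹ (inv_pos.2 hc)).comp tendsto_inv_nhdsGT_zero
  rw [inv_rpow hc.le, ← rpow_neg hc.le] at this
  exact this.congr fun x => by simp [mul_comm]

end IsRegularlyVarying

theorem Asymptotics.IsLittleO.integral_Ioi {f g : ℝ → ℝ} (hfg : f =o[𝓝[>] 0] g)
    (hg : ∀ᶠ x in 𝓝[>] 0, 0 ≤ g x) (hf : ∀ z > 0, IntegrableOn f (Ioi z))
    (hgi : ∀ z > 0, IntegrableOn g (Ioi z))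
    (hG : Tendsto (fun z => ∫ x in Ioi z, g x) (𝓝[>] 0) atTop) :
    (fun z => ∫ x in Ioi z, f x) =o[𝓝[>] 0] fun z => ∫ x in Ioi z, g x := by
  refine IsLittleO.of_bound fun ε hε => ?_
  obtain ⟨δ, hδ, hsub⟩ :=
    mem_nhdsGT_iff_exists_Ioo_subset.1 ((hfg.bound (half_pos hε)).and hg)
  have hd : 0 < δ / 2 := half_pos hδ
  set K := ‖∫ x in Ioi (δ / 2), f x‖ + ε / 2 * ‖∫ x in Ioi (δ / 2), g x‖ with hK
  filter_upwards [Ioo_mem_nhdsGT hd, hG.eventually_ge_atTop (2 * K / ε),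
    hG.eventually_ge_atTop 0] with z hz hGz hG0
  have hzd : z ≤ δ / 2 := hz.2.le
  -- Below `δ / 2` the integrands compare pointwise; the rest of the tail is a constant, which is
  -- negligible because `∫ g` diverges.
  have hloc : ∀ x ∈ Ioc z (δ / 2), ‖f x‖ ≤ ε / 2 * g x := fun x hx => by
    obtain ⟨hfx, hgx⟩ := hsub ⟨hz.1.trans hx.1, hx.2.trans_lt (half_lt_self hδ)⟩
    rwa [norm_of_nonneg hgx] at hfx
  have hnear : ‖∫ x in z..δ / 2, f x‖ ≤
      ε / 2 * ((∫ x in Ioi z, g x) - ∫ x in Ioi (δ / 2), g x) := by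
    rw [intervalIntegral.integral_Ioi_sub_Ioi (hgi z hz.1) hzd,
      ← intervalIntegral.integral_const_mul]
    refine intervalIntegral.norm_integral_le_of_norm_le hzd (ae_of_all _ hloc) ?_
    exact ((intervalIntegrable_iff_integrableOn_Ioc_of_le hzd).2
      ((hgi z hz.1).mono_set Ioc_subset_Ioi_self)).const_mul _
  rw [norm_of_nonneg hG0, ← intervalIntegral.integral_interval_add_Ioi (hf z hz.1) (hf _ hd)]
  calc ‖(∫ x in z..δ / 2, f x) + ∫ x in Ioi (δ / 2), f x‖
      ≤ ‖∫ x in z..δ / 2, f x‖ + ‖∫ x in Ioi (δ / 2), f x‖ := norm_add_le _ _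
    _ ≤ ε / 2 * (∫ x in Ioi z, g x) + K := by
      have := mul_le_mul_of_nonneg_left (neg_le_abs (∫ x in Ioi (δ / 2), g x))
        (half_pos hε).le
      rw [← Real.norm_eq_abs] at this
      linarith
    _ ≤ ε * ∫ x in Ioi z, g x := by
      rw [div_le_iff₀ hε] at hGz
      linarith

theorem isEquivalent_one_sub_exp_neg : (fun u => 1 - exp (-u)) ~[𝓝 0] id := by
  have h : HasDerivAt (fun u => 1 - exp (-u)) 1 0 := by
    simpa using ((hasDerivAt_neg 0).exp).const_sub 1
  exact h.isLittleO.congr (fun u => by simp) (fun u => by simp)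

theorem Asymptotics.IsEquivalent.integral_Ioi {f g : ℝ → ℝ} (hfg : f ~[𝓝[>] 0] g)
    (hg : ∀ᶠ x in 𝓝[>] 0, 0 ≤ g x) (hf : ∀ z > 0, IntegrableOn f (Ioi z))
    (hgi : ∀ z > 0, IntegrableOn g (Ioi z))
    (hG : Tendsto (fun z => ∫ x in Ioi z, g x) (𝓝[>] 0) atTop) :
    (fun z => ∫ x in Ioi z, f x) ~[𝓝[>] 0] fun z => ∫ x in Ioi z, g x := by
  refine (IsLittleO.integral_Ioi hfg hg (fun z hz => (hf z hz).sub (hgi z hz)) hgi hG).congr' ?_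
    EventuallyEq.rfl
  filter_upwards [self_mem_nhdsWithin] with z hz
  simp only [Pi.sub_apply]
  exact integral_sub (hf z hz) (hgi z hz)

theorem IsRegularlyVarying.integral_Ioi {g G : ℝ → ℝ} {p : ℝ}
    (hg : IsRegularlyVarying (𝓝[>] 0) g p) (hpos : ∀ x > 0, 0 < g x)
    (hint : ∀ z > 0, IntegrableOn g (Ioi z)) (hGeq : ∀ z > 0, G z = ∫ x in Ioi z, g x)
    (hG : Tendsto G (𝓝[>] 0) atTop) : IsRegularlyVarying (𝓝[>] 0) G (p + 1) := by
  intro c hc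
  have hcp : 0 < c ^ p := rpow_pos_of_pos hc p
  have hGeq' : G =ᶠ[𝓝[>] 0] fun z => ∫ x in Ioi z, g x :=
    eventually_mem_nhdsWithin.mono hGeq
  have hscale : (fun x => g (c * x)) ~[𝓝[>] 0] fun x => c ^ p * g x := by
    refine isEquivalent_of_tendsto_one ?_
    have h := (hg c hc).div_const (c ^ p)
    rw [div_self hcp.ne'] at h
    exact h.congr fun x => by simp only [Pi.div_apply, div_div, mul_comm]
  have hintegral := IsEquivalent.integral_Ioi hscale
    (eventually_mem_nhdsWithin.mono fun x hx => (mul_pos hcp (hpos x hx)).le)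
    (fun z hz => (integrableOn_Ioi_comp_mul_left_iff g z hc).2 (hint _ (mul_pos hc hz)))
    (fun z hz => (hint z hz).const_mul _)
    (by simpa [integral_const_mul] using
      (hG.congr' hGeq').const_mul_atTop hcp)
  have hequiv : (fun z => G (c * z)) ~[𝓝[>] 0] fun z => c ^ (p + 1) * G z := by
    refine ((IsEquivalent.refl (u := fun _ => c)).mul hintegral).congr_left ?_ |>.congr_right ?_
    · filter_upwards [self_mem_nhdsWithin] with z hz
      simp only [Pi.mul_apply]
      rw [hGeq _ (mul_pos hc hz), ← integral_comp_mul_left_Ioi' g z hc, smul_eq_mul]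
    · filter_upwards [self_mem_nhdsWithin] with z hz
      simp only [Pi.mul_apply]
      rw [hGeq z hz, integral_const_mul, rpow_add_one hc.ne', ← mul_assoc, mul_comm c]
  refine (hequiv.div IsEquivalent.refl).symm.tendsto_nhds (tendsto_const_nhds.congr' ?_)
  filter_upwards [hG.eventually_gt_atTop 0] with z hz
  simp [hz.ne']

theorem isRegularlyVarying_one_div_rpow_mul {L ψ : ℝ → ℝ} {β : ℝ}
    (hL : IsRegularlyVarying atTop L 0) (hψ : ∀ x > 0, ψ x = x ^ β * L (1 / x)) :
    IsRegularlyVarying (𝓝[>] 0) (fun x => 1 / ψ x) (-β) := by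
  have h := ((isRegularlyVarying_rpow eventually_mem_nhdsWithin β).mul hL.comp_inv).inv
  rw [neg_zero, add_zero] at h
  refine h.of_isEquivalent (fun c hc => tendsto_const_mul_nhdsGT_zero hc)
    (EventuallyEq.isEquivalent ?_)
  filter_upwards [self_mem_nhdsWithin] with x hx
  simp [hψ x hx]

theorem strictAntiOn_integral_Ioi {g G : ℝ → ℝ} (hpos : ∀ x > 0, 0 < g x)
    (hint : ∀ z > 0, IntegrableOn g (Ioi z)) (hGeq : ∀ z > 0, G z = ∫ x in Ioi z, g x) :
    StrictAntiOn G (Ioi 0) := fun a ha b hb hab => by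
  rw [hGeq a ha, hGeq b hb, ← intervalIntegral.integral_interval_add_Ioi (hint a ha) (hint b hb),
    lt_add_iff_pos_left]
  exact intervalIntegral.intervalIntegral_pos_of_pos_on
    ((intervalIntegrable_iff_integrableOn_Ioc_of_le hab.le).2
      ((hint a ha).mono_set Ioc_subset_Ioi_self))
    (fun x hx => hpos x (lt_trans ha hx.1)) hab

section InverseFunction

variable {φ φinv : ℝ → ℝ}

theorem tendsto_nhdsGT_zero_atTop_of_surjOn (hφ : AntitoneOn φ (Ioi 0))
    (hsurj : SurjOn φ (Ioi 0) (Ioi 0)) : Tendsto φ (𝓝[>] 0) atTop := by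
  refine tendsto_atTop.2 fun b => ?_
  obtain ⟨x, hx, hφx⟩ := hsurj (mem_Ioi.2 (lt_max_of_lt_left one_pos : (0 : ℝ) < max 1 b))
  filter_upwards [Ioo_mem_nhdsGT hx] with z hz
  calc b ≤ max 1 b := le_max_right _ _
    _ = φ x := hφx.symm
    _ ≤ φ z := hφ hz.1 hx hz.2.le

theorem tendsto_atTop_nhdsGT_zero_of_rightInvOn (hφ : AntitoneOn φ (Ioi 0))
    (hmaps : MapsTo φinv (Ioi 0) (Ioi 0)) (hinv : RightInvOn φinv φ (Ioi 0))
    (hpos : ∀ x > 0, 0 < φ x) : Tendsto φinv atTop (𝓝[>] 0) := by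
  refine tendsto_nhdsWithin_iff.2 ⟨tendsto_order.2 ⟨fun a ha => ?_, fun ε hε => ?_⟩,
    (eventually_gt_atTop 0).mono fun t ht => hmaps ht⟩
  · filter_upwards [eventually_gt_atTop 0] with t ht
    exact ha.trans (hmaps ht)
  · filter_upwards [eventually_gt_atTop (φ ε)] with t ht
    by_contra! h
    have := hφ hε (hmaps ((hpos ε hε).trans ht)) h
    rw [hinv ((hpos ε hε).trans ht)] at this
    exact this.not_gt ht

theorem StrictAntiOn.antitoneOn_of_rightInvOn (hφ : StrictAntiOn φ (Ioi 0))
    (hmaps : MapsTo φinv (Ioi 0) (Ioi 0)) (hinv : RightInvOn φinv φ (Ioi 0)) :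
    AntitoneOn φinv (Ioi 0) := fun s hs t ht hst =>
  (hφ.le_iff_ge (hmaps hs) (hmaps ht)).1 (by rwa [hinv hs, hinv ht])

theorem IsRegularlyVarying.of_rightInvOn {α : ℝ} (hα : 0 < α)
    (hφ : IsRegularlyVarying (𝓝[>] 0) φ (-α)) (hanti : AntitoneOn φ (Ioi 0))
    (hmaps : MapsTo φinv (Ioi 0) (Ioi 0)) (hinv : RightInvOn φinv φ (Ioi 0))
    (hpos : ∀ x > 0, 0 < φ x) (hlim : Tendsto φinv atTop (𝓝[>] 0)) :
    IsRegularlyVarying atTop φinv (-(1 / α)) := by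
  intro c hc
  have hm : (c ^ (-(1 / α))) ^ (-α) = c := by
    rw [← rpow_mul hc.le, neg_mul_neg, one_div_mul_cancel hα.ne', rpow_one]
  have hm0 : 0 < c ^ (-(1 / α)) := rpow_pos_of_pos hc _
  have key : ∀ᶠ t in atTop, 0 < t ∧ φ (φinv (c * t)) = c * φ (φinv t) := by
    filter_upwards [eventually_gt_atTop 0] with t ht
    exact ⟨ht, by rw [hinv ht, hinv (mul_pos hc ht)]⟩
  refine tendsto_order.2 ⟨fun a ha => ?_, fun b hb => ?_⟩
  · rcases le_or_gt a 0 with ha0 | ha0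
    · filter_upwards [eventually_gt_atTop 0] with t ht
      exact ha0.trans_lt (div_pos (hmaps (mul_pos hc ht)) (hmaps ht))
    have hca : c < a ^ (-α) := hm ▸ rpow_lt_rpow_of_neg ha0 ha (neg_lt_zero.2 hα)
    filter_upwards [key, hlim.eventually ((hφ a ha0).eventually (eventually_gt_nhds hca))]
      with t ⟨ht, hφct⟩ hlt
    have hz := hmaps ht
    rw [lt_div_iff₀ (hpos _ hz), ← hφct] at hlt
    rw [lt_div_iff₀ hz]
    by_contra! hle
    exact (hanti (hmaps (mul_pos hc ht)) (mul_pos ha0 hz) hle).not_gt hlt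
  · have hb0 := hm0.trans hb
    have hbc : b ^ (-α) < c := hm ▸ rpow_lt_rpow_of_neg hm0 hb (neg_lt_zero.2 hα)
    filter_upwards [key, hlim.eventually ((hφ b hb0).eventually (eventually_lt_nhds hbc))]
      with t ⟨ht, hφct⟩ hlt
    have hz := hmaps ht
    rw [div_lt_iff₀ (hpos _ hz), ← hφct] at hlt
    rw [div_lt_iff₀ hz]
    by_contra! hle
    exact (hanti (mul_pos hb0 hz) (hmaps (mul_pos hc ht)) hle).not_gt hlt

end InverseFunction

theorem le_of_forall_Icc_of_le_two_mul {β : Type*} [Preorder β] {g : ℝ → β} {T : ℝ} {c : β}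
    (hT : 0 < T) (hdouble : ∀ t ≥ T, g t ≤ g (2 * t)) (hbase : ∀ t ∈ Icc T (2 * T), c ≤ g t) :
    ∀ t ≥ T, c ≤ g t := by
  have key : ∀ n : ℕ, ∀ t ∈ Icc T (2 ^ n * T), c ≤ g t := by
    intro n
    induction n with
    | zero => exact fun t ht => hbase t ⟨ht.1, by linarith [ht.2]⟩
    | succ n ih =>
      rintro t ⟨hTt, ht⟩
      rcases le_or_gt t (2 * T) with h | h
      · exact hbase t ⟨hTt, h⟩
      · calc c ≤ g (t / 2) := ih (t / 2) ⟨by linarith, by rw [pow_succ] at ht; linarith⟩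
          _ ≤ g (2 * (t / 2)) := hdouble _ (by linarith)
          _ = g t := by rw [mul_div_cancel₀ t two_ne_zero]
  intro t ht
  obtain ⟨n, hn⟩ := pow_unbounded_of_one_lt (t / T) one_lt_two
  exact key n t ⟨ht, ((div_lt_iff₀ hT).1 hn).le⟩

namespace IsRegularlyVarying

variable {f : ℝ → ℝ} {ρ p q : ℝ}

theorem eventually_rpow_mul_le_two_mul (hf : IsRegularlyVarying atTop f (-ρ))
    (hpos : ∀ t > 0, 0 < f t) (hρq : ρ < q) :
    ∀ᶠ t in atTop, t ^ q * f t ≤ (2 * t) ^ q * f (2 * t) := by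
  have hg := (isRegularlyVarying_rpow (eventually_gt_atTop 0) q).mul hf 2 two_pos
  have h1 : 1 < (2 : ℝ) ^ (q + -ρ) := one_lt_rpow one_lt_two (by linarith)
  filter_upwards [hg.eventually (eventually_gt_nhds h1), eventually_gt_atTop 0] with t ht ht0
  exact (one_lt_div (mul_pos (rpow_pos_of_pos ht0 q) (hpos t ht0))).1 ht |>.le

theorem eventually_two_mul_le_rpow_mul (hf : IsRegularlyVarying atTop f (-ρ))
    (hpos : ∀ t > 0, 0 < f t) (hqρ : q < ρ) :
    ∀ᶠ t in atTop, (2 * t) ^ q * f (2 * t) ≤ t ^ q * f t := by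
  have hg := (isRegularlyVarying_rpow (eventually_gt_atTop 0) q).mul hf 2 two_pos
  have h1 : (2 : ℝ) ^ (q + -ρ) < 1 := rpow_lt_one_of_one_lt_of_neg one_lt_two (by linarith)
  filter_upwards [hg.eventually (eventually_lt_nhds h1), eventually_gt_atTop 0] with t ht ht0
  exact (div_lt_one (mul_pos (rpow_pos_of_pos ht0 q) (hpos t ht0))).1 ht |>.le

theorem exists_pos_le_rpow_mul (hf : IsRegularlyVarying atTop f (-ρ)) (hpos : ∀ t > 0, 0 < f t)
    (hanti : AntitoneOn f (Ioi 0)) (hq : 0 ≤ q) (hρq : ρ < q) :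
    ∃ c > 0, ∀ᶠ t in atTop, c ≤ t ^ q * f t := by
  obtain ⟨T, hT⟩ := eventually_atTop.1
    ((hf.eventually_rpow_mul_le_two_mul hpos hρq).and (eventually_gt_atTop 0))
  have hT0 : 0 < T := (hT T le_rfl).2
  refine ⟨T ^ q * f (2 * T), mul_pos (rpow_pos_of_pos hT0 q) (hpos _ (by linarith)),
    eventually_atTop.2 ⟨T, le_of_forall_Icc_of_le_two_mul hT0 (fun t ht => (hT t ht).1) ?_⟩⟩
  intro t ht
  have ht0 : 0 < t := hT0.trans_le ht.1
  exact mul_le_mul (rpow_le_rpow hT0.le ht.1 hq) (hanti ht0 (mem_Ioi.2 (by linarith)) ht.2)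
    (hpos _ (by linarith)).le (rpow_nonneg ht0.le q)

theorem exists_rpow_mul_le (hf : IsRegularlyVarying atTop f (-ρ)) (hpos : ∀ t > 0, 0 < f t)
    (hanti : AntitoneOn f (Ioi 0)) (hq : 0 ≤ q) (hqρ : q < ρ) :
    ∃ C, ∀ᶠ t in atTop, t ^ q * f t ≤ C := by
  obtain ⟨T, hT⟩ := eventually_atTop.1
    ((hf.eventually_two_mul_le_rpow_mul hpos hqρ).and (eventually_gt_atTop 0))
  have hT0 : 0 < T := (hT T le_rfl).2
  refine ⟨(2 * T) ^ q * f T, eventually_atTop.2 ⟨T,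
    le_of_forall_Icc_of_le_two_mul (β := ℝᵒᵈ) hT0 (fun t ht => (hT t ht).1) ?_⟩⟩
  intro t ht
  have ht0 : 0 < t := hT0.trans_le ht.1
  change t ^ q * f t ≤ (2 * T) ^ q * f T
  exact mul_le_mul (rpow_le_rpow ht0.le ht.2 hq) (hanti hT0 ht0 ht.1) (hpos t ht0).le
    (rpow_nonneg (by linarith) q)

theorem tendsto_rpow_mul_atTop (hf : IsRegularlyVarying atTop f (-ρ)) (hpos : ∀ t > 0, 0 < f t)
    (hanti : AntitoneOn f (Ioi 0)) (hρ : 0 ≤ ρ) (hρp : ρ < p) :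
    Tendsto (fun t => t ^ p * f t) atTop atTop := by
  set q := (ρ + p) / 2 with hq
  obtain ⟨c, hc, hle⟩ :=
    hf.exists_pos_le_rpow_mul hpos hanti (q := q) (by linarith) (by linarith)
  refine tendsto_atTop_mono' atTop ?_
    ((tendsto_rpow_atTop (by linarith : 0 < p - q)).atTop_mul_const hc)
  filter_upwards [hle, eventually_gt_atTop 0] with t ht ht0
  calc t ^ (p - q) * c ≤ t ^ (p - q) * (t ^ q * f t) :=
        mul_le_mul_of_nonneg_left ht (rpow_nonneg ht0.le _)
    _ = t ^ p * f t := by rw [← mul_assoc, ← rpow_add ht0, sub_add_cancel]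

theorem tendsto_rpow_mul_zero (hf : IsRegularlyVarying atTop f (-ρ)) (hpos : ∀ t > 0, 0 < f t)
    (hanti : AntitoneOn f (Ioi 0)) (hρ : 0 < ρ) (hpρ : p < ρ) :
    Tendsto (fun t => t ^ p * f t) atTop (𝓝 0) := by
  set q := (max p 0 + ρ) / 2 with hq
  obtain ⟨C, hle⟩ := hf.exists_rpow_mul_le hpos hanti (q := q)
    (by positivity) (by linarith [max_lt hpρ hρ])
  have hlim := (tendsto_rpow_neg_atTop (by linarith [le_max_left p 0] : 0 < q - p)).mul_const C
  rw [zero_mul] at hlim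
  refine squeeze_zero' ?_ ?_ hlim
  · filter_upwards [eventually_gt_atTop 0] with t ht0
    exact mul_nonneg (rpow_nonneg ht0.le _) (hpos t ht0).le
  · filter_upwards [hle, eventually_gt_atTop 0] with t ht ht0
    calc t ^ p * f t = t ^ (-(q - p)) * (t ^ q * f t) := by
          rw [← mul_assoc, ← rpow_add ht0, neg_sub, sub_add_cancel]
      _ ≤ t ^ (-(q - p)) * C := mul_le_mul_of_nonneg_left ht (rpow_nonneg ht0.le _)

end IsRegularlyVarying

theorem stmt8_general (α : ℝ) (hα : 0 < α)
    (L : ℝ → ℝ) (hLpos : ∀ x > 0, 0 < L x)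
    (hL : ∀ l > 0, Tendsto (fun x => L (l * x) / L x) atTop (nhds 1))
    (ψ : ℝ → ℝ) (hψ : ∀ l > 0, ψ l = l ^ (1 + α) * L (1 / l))
    (φ φinv : ℝ → ℝ)
    (hφ : ∀ z > 0, φ z = ∫ ξ in Set.Ioi z, 1 / ψ ξ)
    (hbij : Set.BijOn φ (Set.Ioi 0) (Set.Ioi 0))
    (hinv : Set.InvOn φinv φ (Set.Ioi 0) (Set.Ioi 0))
    (F : ℝ → ℝ) (hF : ∀ t > 0, F t = 1 - Real.exp (-(φinv t))) :
    (∀ l > 0, Tendsto (fun t => F (l * t) / F t) atTop (nhds (l ^ (-(1 / α))))) ∧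
    (∀ δ > 0, Tendsto (fun t => t ^ (1 / α + δ) * F t) atTop atTop) ∧
    (∀ δ > 0, Tendsto (fun t => t ^ (1 / α - δ) * F t) atTop (nhds 0)) := by
  have hψpos : ∀ x > 0, 0 < 1 / ψ x := fun x hx => by
    rw [hψ x hx]
    exact one_div_pos.2 (mul_pos (rpow_pos_of_pos hx _) (hLpos _ (one_div_pos.2 hx)))
  have hφpos : ∀ z > 0, 0 < φ z := fun z hz => hbij.mapsTo hz
  have hint : ∀ z > 0, IntegrableOn (fun ξ => 1 / ψ ξ) (Ioi z) := fun z hz =>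
    Integrable.of_integral_ne_zero (hφ z hz ▸ (hφpos z hz).ne')
  have hanti := strictAntiOn_integral_Ioi hψpos hint hφ
  have hmaps : MapsTo φinv (Ioi 0) (Ioi 0) := hinv.1.mapsTo hbij.surjOn
  have hφinv0 := tendsto_atTop_nhdsGT_zero_of_rightInvOn hanti.antitoneOn hmaps hinv.2 hφpos
  have hφRV : IsRegularlyVarying (𝓝[>] 0) φ (-α) := by
    have h := (isRegularlyVarying_one_div_rpow_mul (fun c hc => by simpa using hL c hc) hψ
      ).integral_Ioi hψpos hint hφ
        (tendsto_nhdsGT_zero_atTop_of_surjOn hanti.antitoneOn hbij.surjOn)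
    rwa [show -(1 + α) + 1 = -α by ring] at h
  have hFequiv : F ~[atTop] φinv :=
    (isEquivalent_one_sub_exp_neg.comp_tendsto (hφinv0.mono_right nhdsWithin_le_nhds)
      ).congr_left ((eventually_gt_atTop 0).mono fun t ht => (hF t ht).symm)
  have hFRV : IsRegularlyVarying atTop F (-(1 / α)) :=
    (hφRV.of_rightInvOn hα hanti.antitoneOn hmaps hinv.2 hφpos hφinv0).of_isEquivalent
      (fun c hc => tendsto_id.const_mul_atTop hc) hFequiv
  have hFpos : ∀ t > 0, 0 < F t := fun t ht => by
    rw [hF t ht, sub_pos, exp_lt_one_iff, neg_lt_zero]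
    exact hmaps ht
  have hFanti : AntitoneOn F (Ioi 0) := fun s hs t ht hst => by
    rw [hF s hs, hF t ht]
    gcongr
    exact hanti.antitoneOn_of_rightInvOn hmaps hinv.2 hs ht hst
  refine ⟨hFRV, fun δ hδ => ?_, fun δ hδ => ?_⟩
  · exact hFRV.tendsto_rpow_mul_atTop hFpos hFanti (by positivity) (by linarith)
  · exact hFRV.tendsto_rpow_mul_zero hFpos hFanti (by positivity) (by linarith)

/-- for `ψ(λ) = λ^{1+α} L(1/λ)` with `α ∈ (0,1]`,
`φ(z) = ∫_z^∞ dξ/ψ ξ`, and `F̄(t) = 1 - exp(-φ⁻¹(t))`, the function `F̄` is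
regularly varying at infinity with index `-1/α`; consequently, for every
`δ > 0`, `t^{1/α+δ} F̄(t) → ∞` and `t^{1/α-δ} F̄(t) → 0`. -/
theorem stmt8 (α : ℝ) (hα : 0 < α) (hα1 : α ≤ 1)
    (L : ℝ → ℝ) (hLpos : ∀ x > 0, 0 < L x)
    (hL : ∀ l > 0, Tendsto (fun x => L (l * x) / L x) atTop (nhds 1))
    (ψ : ℝ → ℝ) (hψ : ∀ l > 0, ψ l = l ^ (1 + α) * L (1 / l))
    (φ φinv : ℝ → ℝ)
    (hφ : ∀ z > 0, φ z = ∫ ξ in Set.Ioi z, 1 / ψ ξ)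
    (hbij : Set.BijOn φ (Set.Ioi 0) (Set.Ioi 0))
    (hinv : Set.InvOn φinv φ (Set.Ioi 0) (Set.Ioi 0))
    (F : ℝ → ℝ) (hF : ∀ t > 0, F t = 1 - Real.exp (-(φinv t))) :
    (∀ l > 0, Tendsto (fun t => F (l * t) / F t) atTop (nhds (l ^ (-(1 / α))))) ∧
    (∀ δ > 0, Tendsto (fun t => t ^ (1 / α + δ) * F t) atTop atTop) ∧
    (∀ δ > 0, Tendsto (fun t => t ^ (1 / α - δ) * F t) atTop (nhds 0)) :=
  stmt8_general α hα L hLpos hL ψ hψ φ φinv hφ hbij hinv F hF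
end

section
/- Let α ∈ (0,1] and c > 0. Suppose h̄ : (0,∞) → (0,1] is differentiable, satisfies the ODE (θ/h̄(θ))^{-1/α - 1} · h̄'(θ)^{-1/α} = c for all θ > 0, h̄'(θ) > 0, and h̄(θ) → 1 as θ → ∞. Then h̄(θ) = (1 + c^{-α} θ^{-α})^{-1/α} for all θ > 0. -/
open Filter Real

/-- uniqueness for the ODE
`(θ/h̄(θ))^{-1/α-1} · h̄'(θ)^{-1/α} = c` with `h̄' > 0`, `0 < h̄ ≤ 1` and
`h̄(θ) → 1` as `θ → ∞`: the solution is `h̄(θ) = (1 + c^{-α} θ^{-α})^{-1/α}`. -/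
theorem stmt11 (α : ℝ) (hα : 0 < α) (hα1 : α ≤ 1) (c : ℝ) (hc : 0 < c)
    (h : ℝ → ℝ) (h' : ℝ → ℝ)
    (hrange : ∀ θ > 0, 0 < h θ ∧ h θ ≤ 1)
    (hderiv : ∀ θ > 0, HasDerivAt h (h' θ) θ)
    (hpos : ∀ θ > 0, 0 < h' θ)
    (hode : ∀ θ > 0, (θ / h θ) ^ (-(1 / α) - 1) * (h' θ) ^ (-(1 / α)) = c)
    (hlim : Tendsto h atTop (nhds 1)) :
    ∀ θ > 0, h θ = (1 + c ^ (-α) * θ ^ (-α)) ^ (-(1 / α)) := by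
  have hαne : α ≠ 0 := ne_of_gt hα
  -- KEY: (θ/hθ)^(1+α) * h' θ = c^(-α)
  have key : ∀ θ > 0, (θ / h θ) ^ (1 + α) * h' θ = c ^ (-α) := by
    intro θ hθ
    have hh := (hrange θ hθ).1
    have hdiv : 0 < θ / h θ := div_pos hθ hh
    have h1 := congrArg (fun x => x ^ (-α)) (hode θ hθ)
    rw [Real.mul_rpow (Real.rpow_nonneg hdiv.le _) (Real.rpow_nonneg (hpos θ hθ).le _)] at h1
    rw [← Real.rpow_mul hdiv.le, ← Real.rpow_mul (hpos θ hθ).le] at h1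
    have e1 : (-(1/α) - 1) * (-α) = 1 + α := by field_simp; ring
    have e2 : (-(1/α)) * (-α) = 1 := by field_simp
    rw [e1, e2, Real.rpow_one] at h1
    exact h1
  -- the derivative of G is zero
  set G : ℝ → ℝ := fun t => h t ^ (-α) - c ^ (-α) * t ^ (-α) with hG
  have hGderiv : ∀ θ > 0, HasDerivAt G 0 θ := by
    intro θ hθ
    have hh := (hrange θ hθ).1
    have d1 : HasDerivAt (fun t => h t ^ (-α)) (h' θ * (-α) * h θ ^ (-α - 1)) θ :=
      (hderiv θ hθ).rpow_const (Or.inl hh.ne')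
    have d2 : HasDerivAt (fun t => c ^ (-α) * t ^ (-α)) (c ^ (-α) * ((-α) * θ ^ (-α - 1))) θ :=
      (Real.hasDerivAt_rpow_const (Or.inl hθ.ne')).const_mul _
    have := d1.sub d2
    convert this using 1
    case e'_4 => rfl
    case e'_5 => rfl
    case e'_8 => rfl
    have hk := key θ hθ
    rw [div_rpow hθ.le hh.le] at hk
    have hθα : (0:ℝ) < θ ^ (1 + α) := Real.rpow_pos_of_pos hθ _
    have hhα : (0:ℝ) < h θ ^ (1 + α) := Real.rpow_pos_of_pos hh _
    have hh' : h' θ = c ^ (-α) * h θ ^ (1 + α) / θ ^ (1 + α) := by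
      field_simp at hk ⊢; linarith [hk]
    rw [hh']
    have e3 : h θ ^ (1 + α) * h θ ^ (-α - 1) = 1 := by
      rw [← Real.rpow_add hh, show (1 + α + (-α - 1) : ℝ) = 0 by ring, Real.rpow_zero]
    have e4 : θ ^ (-α - 1) * θ ^ (1 + α) = 1 := by
      rw [← Real.rpow_add hθ, show (-α - 1 + (1 + α) : ℝ) = 0 by ring, Real.rpow_zero]
    field_simp
    linear_combination (c ^ (-α) * α) * e3 - (c ^ (-α) * α) * e4
  -- G is constant on Ioi 0
  have hconst : ∀ a > 0, ∀ b, a ≤ b → G b = G a := by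
    intro a ha b hab
    have : ∀ y ∈ Set.Icc a b, G y = G a := by
      apply constant_of_has_deriv_right_zero
      · intro x hx
        exact ((hGderiv x (lt_of_lt_of_le ha hx.1)).continuousAt).continuousWithinAt
      · intro x hx
        exact (hGderiv x (lt_of_lt_of_le ha hx.1)).hasDerivWithinAt
    exact this b ⟨hab, le_rfl⟩
  -- limit of G at top is 1
  have hGlim : Tendsto G atTop (nhds 1) := by
    have l1 : Tendsto (fun t => h t ^ (-α)) atTop (nhds 1) := by
      have := hlim.rpow_const (p := -α) (Or.inl one_ne_zero)
      rwa [Real.one_rpow] at this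
    have l2 : Tendsto (fun t : ℝ => c ^ (-α) * t ^ (-α)) atTop (nhds 0) := by
      have := (tendsto_rpow_neg_atTop hα).const_mul (c ^ (-α))
      simpa using this
    simpa using l1.sub l2
  -- hence G θ = 1 for θ > 0
  have hG1 : ∀ θ > 0, G θ = 1 := by
    intro θ hθ
    have hconst' : Tendsto G atTop (nhds (G θ)) := by
      apply Tendsto.congr' _ tendsto_const_nhds
      filter_upwards [eventually_ge_atTop θ] with t ht
      exact (hconst θ hθ t ht).symm
    exact tendsto_nhds_unique hconst' hGlim
  -- conclude
  intro θ hθ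
  have hh := (hrange θ hθ).1
  have hval : h θ ^ (-α) = 1 + c ^ (-α) * θ ^ (-α) := by
    have := hG1 θ hθ
    simp only [hG, G] at this
    linarith
  have : (h θ ^ (-α)) ^ (-(1/α)) = h θ := by
    rw [← Real.rpow_mul hh.le]
    have : (-α) * (-(1/α)) = 1 := by field_simp
    rw [this, Real.rpow_one]
  rw [← this, hval]
end

section
/- Let ψ : (0,∞) → (0,∞) be monotone (increasing), and suppose there exist a continuous strictly decreasing function λ : (0,∞) → (0,∞) and a function ξ such that lim_{s↓0} ψ(λ(θ)s)/ψ(s) = ξ(λ(θ)) for every θ > 0. Then lim_{s↓0} ψ(λs)/ψ(s) exists for every λ in the interval (0, λ(0+)), and by Karamata's characterization theorem there exists p ∈ ℝ such that the limit equals λ^p for all λ > 0, i.e., ψ is regularly varying at 0 with index p. -/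
open Filter Set Real

/-!
The ratios `l > 0` for which `ψ (l * s) / ψ s` has a positive limit as `s → 0⁺` form a
multiplicative group. By continuity it contains the nondegenerate interval `λ([1, 2])`, so after
taking logarithms it is an additive subgroup of `ℝ` with nonempty interior, hence open, closed and
therefore all of `ℝ`. The limit is then a monotone multiplicative function of `l`; its logarithm is
a monotone, hence measurable, hence continuous additive map, i.e. linear, so the limit is `l ^ p`.
-/

open Topology

def RatioTendsto (ψ : ℝ → ℝ) (l c : ℝ) : Prop :=
  Tendsto (fun s => ψ (l * s) / ψ s) (𝓝[>] 0) (𝓝 c)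

lemma tendsto_const_mul_nhdsGT_zero_s19 {l : ℝ} (hl : 0 < l) :
    Tendsto (l * ·) (𝓝[>] 0) (𝓝[>] 0) :=
  tendsto_comap.mono_left (comap_mulLeft_nhdsGT_zero hl).ge

namespace RatioTendsto

variable {ψ : ℝ → ℝ} {l l₁ l₂ c c₁ c₂ : ℝ}

lemma mul (hψ : ∀ x > 0, ψ x ≠ 0) (h₁ : RatioTendsto ψ l₁ c₁) (h₂ : RatioTendsto ψ l₂ c₂)
    (hl₂ : 0 < l₂) : RatioTendsto ψ (l₁ * l₂) (c₁ * c₂) := by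
  refine ((h₁.comp (tendsto_const_mul_nhdsGT_zero_s19 hl₂)).mul h₂).congr' ?_
  filter_upwards [self_mem_nhdsWithin] with s (hs : 0 < s)
  rw [Function.comp_apply, div_mul_div_cancel₀ (hψ _ (mul_pos hl₂ hs)), mul_assoc]

lemma inv (h : RatioTendsto ψ l c) (hl : 0 < l) (hc : c ≠ 0) : RatioTendsto ψ l⁻¹ c⁻¹ := by
  refine ((h.comp (tendsto_const_mul_nhdsGT_zero_s19 (inv_pos.2 hl))).inv₀ hc).congr' ?_
  filter_upwards with s
  rw [Function.comp_apply, mul_inv_cancel_left₀ hl.ne', inv_div]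

lemma le_of_le (hψ : ∀ x > 0, 0 < ψ x) (hmono : MonotoneOn ψ (Ioi 0)) (h₁ : RatioTendsto ψ l₁ c₁)
    (h₂ : RatioTendsto ψ l₂ c₂) (hl₁ : 0 < l₁) (hl : l₁ ≤ l₂) : c₁ ≤ c₂ := by
  refine le_of_tendsto_of_tendsto h₁ h₂ ?_
  filter_upwards [self_mem_nhdsWithin] with s (hs : 0 < s)
  refine div_le_div_of_nonneg_right ?_ (hψ s hs).le
  exact hmono (mul_pos hl₁ hs) (mul_pos (hl₁.trans_le hl) hs)
    (mul_le_mul_of_nonneg_right hl hs.le)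

end RatioTendsto

lemma AddSubgroup.eq_top_of_Ioo_subset {H : AddSubgroup ℝ} {a b : ℝ} (hab : a < b)
    (h : Ioo a b ⊆ H) : H = ⊤ := by
  have hopen : IsOpen (H : Set ℝ) :=
    H.isOpen_of_mem_nhds (mem_of_superset (Ioo_mem_nhds (left_lt_add_div_two.2 hab)
      (add_div_two_lt_right.2 hab)) h)
  exact AddSubgroup.coe_eq_univ.1
    (IsClopen.eq_univ ⟨H.isClosed_of_isOpen hopen, hopen⟩ ⟨0, H.zero_mem⟩)

lemma Ioi_zero_subset_of_Icc_subset {S : Set ℝ} (hmul : ∀ x ∈ S, ∀ y ∈ S, x * y ∈ S)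
    (hinv : ∀ x ∈ S, x⁻¹ ∈ S) {a b : ℝ} (ha : 0 < a) (hab : a < b) (hS : Icc a b ⊆ S) :
    Ioi 0 ⊆ S := by
  have haS : a ∈ S := hS (left_mem_Icc.2 hab.le)
  let H : AddSubgroup ℝ :=
    { carrier := exp ⁻¹' S
      zero_mem' := by simpa [mul_inv_cancel₀ ha.ne'] using hmul a haS _ (hinv a haS)
      add_mem' := fun {x y} hx hy => by simpa [exp_add] using hmul _ hx _ hy
      neg_mem' := fun {x} hx => by simpa [exp_neg] using hinv _ hx }
  have hH : H = ⊤ := by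
    refine AddSubgroup.eq_top_of_Ioo_subset (log_lt_log ha hab) fun x hx => ?_
    refine hS ⟨?_, ?_⟩
    · simpa [exp_log ha] using exp_le_exp.2 hx.1.le
    · simpa [exp_log (ha.trans hab)] using exp_le_exp.2 hx.2.le
  intro x (hx : 0 < x)
  have hlog : exp (log x) ∈ S := (hH ▸ AddSubgroup.mem_top (log x) : log x ∈ H)
  rwa [exp_log hx] at hlog

lemma exists_rpow_of_map_mul {c : ℝ → ℝ} (hpos : ∀ x > 0, 0 < c x)
    (hmul : ∀ x > 0, ∀ y > 0, c (x * y) = c x * c y) (hmono : MonotoneOn c (Ioi 0)) :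
    ∃ p : ℝ, ∀ x > 0, c x = x ^ p := by
  let γ : ℝ →+ ℝ := AddMonoidHom.mk' (fun a => log (c (exp a))) fun a b => by
    rw [exp_add, hmul _ (exp_pos a) _ (exp_pos b),
      log_mul (hpos _ (exp_pos a)).ne' (hpos _ (exp_pos b)).ne']
  have hγ : Monotone γ := fun a b hab =>
    log_le_log (hpos _ (exp_pos a)) (hmono (exp_pos a) (exp_pos b) (exp_le_exp.2 hab))
  have hγc : Continuous γ :=
    MeasureTheory.Measure.AddMonoidHom.continuous_of_measurable γ hγ.measurable
  refine ⟨γ 1, fun x hx => ?_⟩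
  have hlin : γ (log x) = log x * γ 1 := by simpa using map_real_smul γ hγc (log x) 1
  have hlog : log (c (exp (log x))) = log x * γ 1 := hlin
  rw [exp_log hx] at hlog
  rw [rpow_def_of_pos hx, ← hlog, exp_log (hpos x hx)]

/-- if `ψ` is monotone on `(0,∞)` and
`ψ(λ(θ)s)/ψ(s) → ξ(λ(θ))` as `s ↓ 0` for a continuous strictly decreasing
positive `λ(·)`, then `ψ(ls)/ψ(s)` converges as `s ↓ 0` for all
`l ∈ (0, λ(0+))`, and there is `p ∈ ℝ` such that the limit is `l^p` for all
`l > 0`, i.e. `ψ` is regularly varying at `0`. -/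
theorem stmt19 (ψ : ℝ → ℝ) (hψpos : ∀ x > 0, 0 < ψ x)
    (hψmono : MonotoneOn ψ (Set.Ioi 0))
    (lam : ℝ → ℝ) (hlamcont : ContinuousOn lam (Set.Ioi 0))
    (hlamanti : StrictAntiOn lam (Set.Ioi 0))
    (hlampos : ∀ θ > 0, 0 < lam θ)
    (ξ : ℝ → ℝ) (hξpos : ∀ θ > 0, 0 < ξ (lam θ))
    (hconv : ∀ θ > 0, Tendsto (fun s => ψ (lam θ * s) / ψ s)
      (nhdsWithin 0 (Set.Ioi 0)) (nhds (ξ (lam θ)))) :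
    (∀ l, 0 < l → l < sSup (lam '' Set.Ioi 0) →
      ∃ cl : ℝ, Tendsto (fun s => ψ (l * s) / ψ s)
        (nhdsWithin 0 (Set.Ioi 0)) (nhds cl)) ∧
    ∃ p : ℝ, ∀ l > 0, Tendsto (fun s => ψ (l * s) / ψ s)
      (nhdsWithin 0 (Set.Ioi 0)) (nhds (l ^ p)) := by
  have hψ0 : ∀ x > 0, ψ x ≠ 0 := fun x hx => (hψpos x hx).ne'
  let S := {l : ℝ | 0 < l ∧ ∃ c > 0, RatioTendsto ψ l c}
  have hlamS : lam '' Ioi 0 ⊆ S := by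
    rintro _ ⟨θ, hθ, rfl⟩
    exact ⟨hlampos θ hθ, _, hξpos θ hθ, hconv θ hθ⟩
  have hIcc : Icc (lam 2) (lam 1) ⊆ S := ((isPreconnected_Ioi.image lam hlamcont).Icc_subset
    ⟨2, mem_Ioi.2 two_pos, rfl⟩ ⟨1, mem_Ioi.2 one_pos, rfl⟩).trans hlamS
  have hS : Ioi 0 ⊆ S := Ioi_zero_subset_of_Icc_subset
    (fun x ⟨hx, c, hc, h⟩ y ⟨hy, d, hd, h'⟩ => ⟨mul_pos hx hy, _, mul_pos hc hd, h.mul hψ0 h' hy⟩)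
    (fun x ⟨hx, c, hc, h⟩ => ⟨inv_pos.2 hx, _, inv_pos.2 hc, h.inv hx hc.ne'⟩)
    (hlampos 2 two_pos) (hlamanti (mem_Ioi.2 one_pos) (mem_Ioi.2 two_pos) one_lt_two) hIcc
  choose! c hcpos hc using fun l (hl : l ∈ Ioi 0) => (hS hl).2
  obtain ⟨p, hp⟩ := exists_rpow_of_map_mul hcpos
    (fun x hx y hy => tendsto_nhds_unique (hc _ (mul_pos hx hy)) ((hc x hx).mul hψ0 (hc y hy) hy))
    (fun x hx y hy hxy => (hc x hx).le_of_le hψpos hψmono (hc y hy) hx hxy)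
  have hlim : ∀ l > 0, RatioTendsto ψ l (l ^ p) := fun l hl => hp l hl ▸ hc l hl
  exact ⟨fun l hl _ => ⟨_, hlim l hl⟩, p, hlim⟩
end
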